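/- Let (P, A, λ) be a marked poset such that λ(a) ∈ ℤ for every a ∈ A. Then the marked order polytope O_{P,A}(λ) is a lattice polytope: every vertex (extreme point) x of O_{P,A}(λ) satisfies x(p) ∈ ℤ for all p ∈ P∖A. -/

import Mathlib

/-!
If a coordinate value `t` of a point `x` of the marked order polytope is not a marking, then
moving all coordinates equal to `t` simultaneously by a small `±ε` keeps every order relation:
relations between two elements at level `t` are unaffected, and the strict ones survive small
perturbations since `P` is finite. So `x` is the midpoint of two other points of the polytope
and is not a vertex. Hence every coordinate of a vertex is one of the markings.
-/

open Classical in
/-- The extension of `x : P∖A → ℝ` to all of `P`, taking the value `lam a` on marked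
elements `a ∈ A`. -/
noncomputable def mopExtend {P : Type*} (A : Set P) (lam : A → ℝ)
    (x : {p : P // p ∉ A} → ℝ) : P → ℝ :=
  fun p => if h : p ∈ A then lam ⟨p, h⟩ else x ⟨p, h⟩

/-- The marked order polytope of the marked poset `(P, A, lam)`, realized in `ℝ^{P∖A}`. -/
def markedOrderPolytope {P : Type*} [PartialOrder P] (A : Set P) (lam : A → ℝ) :
    Set ({p : P // p ∉ A} → ℝ) :=
  {x | ∀ p q : P, p ≤ q → mopExtend A lam x p ≤ mopExtend A lam x q}

open Filter Topology

theorem eq_zero_of_mem_extremePoints_of_eventually_add_smul_mem {E : Type*} [AddCommGroup E]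
    [Module ℝ E] {K : Set E} {x d : E} (hx : x ∈ K.extremePoints ℝ)
    (hK : ∀ᶠ ε in 𝓝 (0 : ℝ), x + ε • d ∈ K) : d = 0 := by
  have hK_neg : ∀ᶠ ε in 𝓝 (0 : ℝ), x + (-ε) • d ∈ K :=
    (continuous_neg.tendsto' 0 0 neg_zero).eventually hK
  obtain ⟨ε, ⟨hplus, hminus⟩, hε⟩ :=
    (((hK.and hK_neg).filter_mono nhdsWithin_le_nhds).and
      (self_mem_nhdsWithin : {0}ᶜ ∈ 𝓝[≠] (0 : ℝ))).exists
  rw [neg_smul, ← sub_eq_add_neg] at hminus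
  have hε_d : ε • d = 0 := by
    simpa using
      ((mem_extremePoints.1 hx).2 _ hminus _ hplus (mem_openSegment_sub_add x (ε • d))).2
  exact (smul_eq_zero.1 hε_d).resolve_left hε

theorem eventually_monotone_add_smul_indicator {ι : Type*} [Finite ι] [Preorder ι]
    {f : ι → ℝ} (hf : Monotone f) (t : ℝ) :
    ∀ᶠ ε in 𝓝 (0 : ℝ), Monotone (f + ε • {i | f i = t}.indicator (1 : ι → ℝ)) := by
  set d := {i | f i = t}.indicator (1 : ι → ℝ)
  have hpair : ∀ p q : ι, ∀ᶠ ε in 𝓝 (0 : ℝ), p ≤ q → (f + ε • d) p ≤ (f + ε • d) q := by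
    intro p q
    by_cases hpq : p ≤ q
    · simp only [hpq, true_imp_iff, Pi.add_apply, Pi.smul_apply, smul_eq_mul]
      rcases (hf hpq).lt_or_eq with hlt | heq
      · have hcont : ∀ i, Tendsto (fun ε : ℝ => f i + ε * d i) (𝓝 0) (𝓝 (f i)) := fun i =>
          (by fun_prop : Continuous fun ε : ℝ => f i + ε * d i).tendsto' 0 (f i) (by simp)
        exact ((hcont p).eventually_lt (hcont q) hlt).mono fun _ h => h.le
      · have hd : d p = d q := by simp [d, Set.indicator, heq]
        exact Eventually.of_forall fun ε => by rw [heq, hd]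
    · exact Eventually.of_forall fun _ h => absurd h hpq
  simpa only [Monotone, eventually_all] using hpair

section MarkedOrderPolytope

variable {P : Type*} {A : Set P} {lam : A → ℝ}

theorem mem_markedOrderPolytope_iff_monotone [PartialOrder P] {x : {p : P // p ∉ A} → ℝ} :
    x ∈ markedOrderPolytope A lam ↔ Monotone (mopExtend A lam x) :=
  ⟨fun h p q => h p q, fun h p q => @h p q⟩

theorem mopExtend_add_smul_indicator {x : {p : P // p ∉ A} → ℝ} {t : ℝ}
    (ht : t ∉ Set.range lam) (ε : ℝ) :
    mopExtend A lam (x + ε • {q | x q = t}.indicator 1) =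
      mopExtend A lam x + ε • {p | mopExtend A lam x p = t}.indicator 1 := by
  funext p
  by_cases hp : p ∈ A
  · have hne : lam ⟨p, hp⟩ ≠ t := fun h => ht ⟨_, h⟩
    simp [mopExtend, hp, hne]
  · simp [mopExtend, hp, Set.indicator]

theorem mem_range_of_mem_extremePoints_markedOrderPolytope [PartialOrder P] [Finite P]
    {x : {p : P // p ∉ A} → ℝ} (hx : x ∈ (markedOrderPolytope A lam).extremePoints ℝ)
    (q : {p : P // p ∉ A}) : x q ∈ Set.range lam := by
  by_contra ht
  have hmono := eventually_monotone_add_smul_indicator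
    (mem_markedOrderPolytope_iff_monotone.1 hx.1) (x q)
  have hzero := eq_zero_of_mem_extremePoints_of_eventually_add_smul_mem hx <|
    hmono.mono fun ε h => by
      rwa [mem_markedOrderPolytope_iff_monotone, mopExtend_add_smul_indicator ht]
  simpa using congrFun hzero q

end MarkedOrderPolytope

theorem statement2_general {P : Type*} [Fintype P] [PartialOrder P]
    (A : Set P) (lam : A → ℝ)
    (hint : ∀ a : A, ∃ k : ℤ, lam a = k)
    (x : {p : P // p ∉ A} → ℝ)
    (hx : x ∈ (markedOrderPolytope A lam).extremePoints ℝ) :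
    ∀ p : {p : P // p ∉ A}, ∃ k : ℤ, x p = k := by
  intro p
  obtain ⟨a, ha⟩ := mem_range_of_mem_extremePoints_markedOrderPolytope hx p
  obtain ⟨k, hk⟩ := hint a
  exact ⟨k, ha ▸ hk⟩

/-- If all markings are integral, then the marked order polytope is a lattice polytope:
all coordinates of all of its vertices are integers. -/
theorem statement2 {P : Type*} [Fintype P] [PartialOrder P]
    (A : Set P) (lam : A → ℝ)
    (hAmin : ∀ p : P, IsMin p → p ∈ A) (hAmax : ∀ p : P, IsMax p → p ∈ A)
    (hlam : ∀ a b : A, (a : P) ≤ (b : P) → lam a ≤ lam b)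
    (hint : ∀ a : A, ∃ k : ℤ, lam a = k)
    (x : {p : P // p ∉ A} → ℝ)
    (hx : x ∈ (markedOrderPolytope A lam).extremePoints ℝ) :
    ∀ p : {p : P // p ∉ A}, ∃ k : ℤ, x p = k :=
  statement2_general A lam hint x hx
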